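/- For every β ≥ 0, every finite Λ ⊂ ℤ³, every field h ∈ ℝ^Λ, all y, z ∈ Λ and every increasing event A ⊂ {−1,+1}^Λ: |⟨σ_yσ_z;I_A⟩_{Λ,β,h}| ≤ ⟨σ_y;I_A⟩_{Λ,β,h} + ⟨σ_z;I_A⟩_{Λ,β,h}. -/

import Mathlib

open scoped BigOperators
open Classical Filter MeasureTheory

namespace Ising

/-- Vertices of the lattice `T×Z` are the points of `ℤ³`. -/
abbrev V : Type := ℤ × ℤ × ℤ

/-- The eight difference vectors defining adjacency in `T×Z`:
`±(1,0,0), ±(0,1,0), ±(1,1,0), ±(0,0,1)`. -/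
def dirs : Finset V :=
  {(1,0,0), (-1,0,0), (0,1,0), (0,-1,0), (1,1,0), (-1,-1,0), (0,0,1), (0,0,-1)}

/-- Adjacency in the lattice `T×Z`. -/
def adj (x y : V) : Prop := y - x ∈ dirs

/-- The neighbours of a vertex in `T×Z`. -/
def nbrs (x : V) : Finset V := dirs.image (fun d => x + d)

/-- Euclidean distance on `ℤ³`. -/
noncomputable def edist (x y : V) : ℝ :=
  Real.sqrt ((((x.1 - y.1) ^ 2 + (x.2.1 - y.2.1) ^ 2 + (x.2.2 - y.2.2) ^ 2 : ℤ) : ℝ))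

/-- Spin configurations on all of `ℤ³`; `true` codes `+1` and `false` codes `-1`. -/
abbrev Config : Type := V → Bool

/-- The `±1`-valued spin at a vertex. -/
noncomputable def spin (σ : Config) (x : V) : ℝ := if σ x then 1 else -1

/-- Extension of a configuration on a finite `Λ` by `-1` (i.e. `false`) outside `Λ`. -/
noncomputable def extend (Λ : Finset V) (σ : Λ → Bool) : Config :=
  fun v => if h : v ∈ Λ then σ ⟨v, h⟩ else false

/-- (Negative of the) Hamiltonian on `Λ` with inverse temperature `β`, boundary
condition `η : V → ℤ` (only values outside `Λ` matter) and field `J : V → ℝ`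
(only values on `Λ` matter): the edge sum is over ordered pairs, divided by two. -/
noncomputable def energy (Λ : Finset V) (β : ℝ) (η : V → ℤ) (J : V → ℝ) (σ : Config) : ℝ :=
  β * ((∑ x ∈ Λ, ∑ y ∈ Λ, if adj x y then spin σ x * spin σ y else 0) / 2)
    + β * (∑ x ∈ Λ, ∑ y ∈ nbrs x, if y ∉ Λ then spin σ x * ((η y : ℤ) : ℝ) else 0)
    + ∑ x ∈ Λ, J x * spin σ x

/-- Boltzmann weight. -/
noncomputable def weight (Λ : Finset V) (β : ℝ) (η : V → ℤ) (J : V → ℝ) (σ : Config) : ℝ :=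
  Real.exp (energy Λ β η J σ)

/-- The partition function. -/
noncomputable def Zpart (Λ : Finset V) (β : ℝ) (η : V → ℤ) (J : V → ℝ) : ℝ :=
  ∑ σ : Λ → Bool, weight Λ β η J (extend Λ σ)

/-- The finite-volume Ising probability of an event `A`. -/
noncomputable def prob (Λ : Finset V) (β : ℝ) (η : V → ℤ) (J : V → ℝ) (A : Set Config) : ℝ :=
  (∑ σ : Λ → Bool, if extend Λ σ ∈ A then weight Λ β η J (extend Λ σ) else 0) / Zpart Λ β η J

/-- Finite-volume expectation `⟨f⟩`. -/
noncomputable def expec (Λ : Finset V) (β : ℝ) (η : V → ℤ) (J : V → ℝ) (f : Config → ℝ) : ℝ :=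
  (∑ σ : Λ → Bool, f (extend Λ σ) * weight Λ β η J (extend Λ σ)) / Zpart Λ β η J

/-- Finite-volume covariance `⟨f;g⟩ = ⟨fg⟩ - ⟨f⟩⟨g⟩`. -/
noncomputable def covar (Λ : Finset V) (β : ℝ) (η : V → ℤ) (J : V → ℝ) (f g : Config → ℝ) : ℝ :=
  expec Λ β η J (fun σ => f σ * g σ) - expec Λ β η J f * expec Λ β η J g

/-- Conditional probability `P(A | B)`. -/
noncomputable def condProb (Λ : Finset V) (β : ℝ) (η : V → ℤ) (J : V → ℝ)
    (A B : Set Config) : ℝ :=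
  prob Λ β η J (A ∩ B) / prob Λ β η J B

/-- Indicator function of an event. -/
noncomputable def ind (A : Set Config) : Config → ℝ := fun σ => if σ ∈ A then 1 else 0

/-- The box `B_n = [-n,n]³ ∩ ℤ³`. -/
noncomputable def box (n : ℕ) : Finset V :=
  Finset.Icc (-(n : ℤ)) (n : ℤ) ×ˢ (Finset.Icc (-(n : ℤ)) (n : ℤ) ×ˢ Finset.Icc (-(n : ℤ)) (n : ℤ))

/-- The translated box `B_m(x) = x + B_m`. -/
noncomputable def boxAt (m : ℕ) (x : V) : Finset V := (box m).image (fun v => x + v)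

/-- The (inner) boundary `∂Λ` of a set of vertices. -/
noncomputable def bdry (Λ : Finset V) : Finset V := Λ.filter (fun x => ∃ y ∈ nbrs x, y ∉ Λ)

/-- An event is increasing if it is preserved by raising spins. -/
def Increasing (A : Set Config) : Prop :=
  ∀ σ τ : Config, σ ∈ A → (∀ v, σ v ≤ τ v) → τ ∈ A

/-- `A ∈ F_Δ`: the event `A` is determined by the spins in `Δ`. -/
def DependsOn (A : Set Config) (Δ : Set V) : Prop :=
  ∀ σ τ : Config, (∀ v ∈ Δ, σ v = τ v) → (σ ∈ A ↔ τ ∈ A)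

/-- The event `{A occurs on Δ}`. -/
def occursOn (A : Set Config) (Δ : Set V) : Set Config :=
  {σ | ∀ τ : Config, (∀ v ∈ Δ, τ v = σ v) → τ ∈ A}

/-- `σ^{Δ+}` (for `b = true`) resp. `σ^{Δ-}` (for `b = false`). -/
noncomputable def forceOn (σ : Config) (Δ : Set V) (b : Bool) : Config :=
  fun v => if v ∈ Δ then b else σ v

/-- The event `{Δ is pivotal for A}`. -/
def pivotal (A : Set Config) (Δ : Set V) : Set Config :=
  {σ | forceOn σ Δ true ∈ A ∧ forceOn σ Δ false ∉ A}

/-- The event `{x is +pivotal for A}`. -/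
def plusPivotal (A : Set Config) (x : V) : Set Config :=
  pivotal A {x} ∩ {σ | σ x = true}

/-- The slab `S_k = ℤ² × {0,…,k}`. -/
def slab (k : ℕ) : Set V := {x | 0 ≤ x.2.2 ∧ x.2.2 ≤ (k : ℤ)}

/-- The event `{∃ LR +crossing in B_n ∩ S_k}`: a path of `+` spins inside `B_n ∩ S_k`
meeting both hyperplanes `{x(1) = -n}` and `{x(1) = n}`. -/
def crossing (n k : ℕ) : Set Config :=
  {σ | ∃ l : List V, l.Chain' adj ∧ (∀ v ∈ l, v ∈ box n ∧ v ∈ slab k ∧ σ v = true) ∧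
      (∃ u ∈ l, u.1 = -(n : ℤ)) ∧ (∃ u ∈ l, u.1 = (n : ℤ))}

/-- `Λ_{(1)}`: the vertices of `Λ` with third coordinate `1`. -/
def lamOne (Λ : Finset V) : Finset V := Λ.filter (fun x => x.2.2 = 1)

/-- The Bernoulli(p) weight `P_p(ω) = p^{|ω⁻¹(1)|}(1-p)^{|ω⁻¹(0)|}`. -/
noncomputable def bern (p : ℝ) (Δ : Finset V) (ω : Δ → Bool) : ℝ :=
  ∏ y : Δ, (if ω y then p else 1 - p)

/-- `ω⁻¹(1)` as a set of vertices. -/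
def openSet (Δ : Finset V) (ω : Δ → Bool) : Set V :=
  {v | ∃ h : v ∈ Δ, ω ⟨v, h⟩ = true}

/-- The measure `μ_{Λ,p,h}` of an event `A` (with free boundary conditions,
inverse temperature `β`, vertex-percolation parameter `p` and field `h`). -/
noncomputable def mu (Λ : Finset V) (β p h : ℝ) (A : Set Config) : ℝ :=
  ∑ ω : lamOne Λ → Bool,
    bern p (lamOne Λ) ω *
      prob Λ β (fun _ => 0) (fun _ => h) (occursOn A (slab 0 ∪ openSet (lamOne Λ) ω))

/-- The field equal to `h + t` on `∂B_m(x) ∩ Λ` and to `h` elsewhere. -/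
noncomputable def gfield (Λ : Finset V) (m : ℕ) (x : V) (h t : ℝ) : V → ℝ :=
  fun y => if y ∈ bdry (boxAt m x) ∩ Λ then h + t else h

/-- Characterization of the regime `β ∈ [0, β_c(T×Z))`: exponential decay of the
two-point function at zero field, uniformly in the volume. -/
def expDecay (β : ℝ) : Prop :=
  ∃ C > (0 : ℝ), ∃ c > (0 : ℝ), ∀ Λ : Finset V, ∀ x ∈ Λ, ∀ y ∈ Λ,
    expec Λ β (fun _ => 0) (fun _ => 0) (fun σ => spin σ x * spin σ y)
      ≤ C * Real.exp (-c * edist x y)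

/-- There is a path of spins `b` (in `T×Z`) from `x` to `y` in the configuration `σ`. -/
def pathIn (σ : Config) (b : Bool) (x y : V) : Prop :=
  ∃ l : List V, l.Chain' adj ∧ l.head? = some x ∧ l.getLast? = some y ∧ ∀ v ∈ l, σ v = b

/-- The `b`-cluster of a vertex. -/
def cluster (σ : Config) (b : Bool) (x : V) : Set V := {y | pathIn σ b x y}

/-- The set `{x : σ_x = b}` has exactly one infinite connected component in `T×Z`. -/
def uniqueInfCluster (σ : Config) (b : Bool) : Prop :=
  ∃ x : V, σ x = b ∧ (cluster σ b x).Infinite ∧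
    ∀ y : V, σ y = b → (cluster σ b y).Infinite → cluster σ b y = cluster σ b x

/-- The event `H(x,ω)` resp. `H(y,ω^{(y)})` at the level of open sets:
`{(crossing n 1) occurs on S_0 ∪ S ∪ {x}}`. -/
def Hx (n : ℕ) (S : Set V) (x : V) : Set Config :=
  occursOn (crossing n 1) (slab 0 ∪ S ∪ {x})


/-! ### Auxiliary lemmas for the FKG-based proof -/

/-- The spin value of a boolean. -/
noncomputable def sp (t : Bool) : ℝ := if t then 1 else -1

lemma spin_extend {Λ : Finset V} (σ : Λ → Bool) {x : V} (hx : x ∈ Λ) :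
    spin (extend Λ σ) x = sp (σ ⟨x, hx⟩) := by
  simp [spin, extend, sp, hx]

lemma sp_mono : Monotone sp := by
  intro a b h
  cases a <;> cases b <;> first | (exact absurd h (by decide)) | norm_num [sp]

lemma sp_ge : ∀ t, (-1 : ℝ) ≤ sp t := by intro t; cases t <;> norm_num [sp]
lemma sp_le : ∀ t, sp t ≤ 1 := by intro t; cases t <;> norm_num [sp]

lemma sp_inf_sup (p q : Bool) : sp (p ⊓ q) + sp (p ⊔ q) = sp p + sp q := by
  cases p <;> cases q <;> simp [sp]

lemma sp_mul_supermod (p q r s : Bool) :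
    sp p * sp r + sp q * sp s ≤ sp (p ⊓ q) * sp (r ⊓ s) + sp (p ⊔ q) * sp (r ⊔ s) := by
  cases p <;> cases q <;> cases r <;> cases s <;> simp [sp] <;> norm_num

lemma energy_zero_eta (Λ : Finset V) (β : ℝ) (J : V → ℝ) (σ : Config) :
    energy Λ β (fun _ => 0) J σ =
      β * ((∑ x ∈ Λ, ∑ y ∈ Λ, if adj x y then spin σ x * spin σ y else 0) / 2)
        + ∑ x ∈ Λ, J x * spin σ x := by
  simp [energy]

lemma energy_supermod (Λ : Finset V) {β : ℝ} (hβ : 0 ≤ β) (J : V → ℝ) (a b : Λ → Bool) :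
    energy Λ β (fun _ => 0) J (extend Λ a) + energy Λ β (fun _ => 0) J (extend Λ b)
      ≤ energy Λ β (fun _ => 0) J (extend Λ (a ⊓ b))
        + energy Λ β (fun _ => 0) J (extend Λ (a ⊔ b)) := by
  rw [energy_zero_eta, energy_zero_eta, energy_zero_eta, energy_zero_eta]
  have hedge :
      (∑ x ∈ Λ, ∑ y ∈ Λ, if adj x y then spin (extend Λ a) x * spin (extend Λ a) y else 0)
        + (∑ x ∈ Λ, ∑ y ∈ Λ, if adj x y then spin (extend Λ b) x * spin (extend Λ b) y else 0)
      ≤ (∑ x ∈ Λ, ∑ y ∈ Λ,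
            if adj x y then spin (extend Λ (a ⊓ b)) x * spin (extend Λ (a ⊓ b)) y else 0)
        + (∑ x ∈ Λ, ∑ y ∈ Λ,
            if adj x y then spin (extend Λ (a ⊔ b)) x * spin (extend Λ (a ⊔ b)) y else 0) := by
    rw [← Finset.sum_add_distrib, ← Finset.sum_add_distrib]
    refine Finset.sum_le_sum fun x hx => ?_
    rw [← Finset.sum_add_distrib, ← Finset.sum_add_distrib]
    refine Finset.sum_le_sum fun w hw => ?_
    by_cases hadj : adj x w
    · simp only [if_pos hadj, spin_extend _ hx, spin_extend _ hw, Pi.inf_apply, Pi.sup_apply]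
      exact sp_mul_supermod _ _ _ _
    · simp [hadj]
  have hfield :
      (∑ x ∈ Λ, J x * spin (extend Λ a) x) + (∑ x ∈ Λ, J x * spin (extend Λ b) x)
      = (∑ x ∈ Λ, J x * spin (extend Λ (a ⊓ b)) x)
        + (∑ x ∈ Λ, J x * spin (extend Λ (a ⊔ b)) x) := by
    rw [← Finset.sum_add_distrib, ← Finset.sum_add_distrib]
    refine Finset.sum_congr rfl fun x hx => ?_
    rw [spin_extend _ hx, spin_extend _ hx, spin_extend _ hx, spin_extend _ hx,
      Pi.inf_apply, Pi.sup_apply, ← mul_add, ← mul_add, sp_inf_sup]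
  have h2 := mul_le_mul_of_nonneg_left hedge hβ
  nlinarith [h2, hfield]

lemma weight_supermod (Λ : Finset V) {β : ℝ} (hβ : 0 ≤ β) (J : V → ℝ) (a b : Λ → Bool) :
    weight Λ β (fun _ => 0) J (extend Λ a) * weight Λ β (fun _ => 0) J (extend Λ b)
      ≤ weight Λ β (fun _ => 0) J (extend Λ (a ⊓ b))
        * weight Λ β (fun _ => 0) J (extend Λ (a ⊔ b)) := by
  rw [weight, weight, weight, weight, ← Real.exp_add, ← Real.exp_add]
  exact Real.exp_le_exp.2 (energy_supermod Λ hβ J a b)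

lemma Zpart_pos (Λ : Finset V) (β : ℝ) (η : V → ℤ) (J : V → ℝ) : 0 < Zpart Λ β η J :=
  Finset.sum_pos (fun _ _ => Real.exp_pos _) ⟨fun _ => false, Finset.mem_univ _⟩

lemma expec_add (Λ : Finset V) (β : ℝ) (η : V → ℤ) (J : V → ℝ) (f g : Config → ℝ) :
    expec Λ β η J (fun σ => f σ + g σ) = expec Λ β η J f + expec Λ β η J g := by
  rw [expec, expec, expec, ← add_div]
  congr 1
  rw [← Finset.sum_add_distrib]
  exact Finset.sum_congr rfl fun σ _ => by ring

lemma expec_cmul (Λ : Finset V) (β : ℝ) (η : V → ℤ) (J : V → ℝ) (c : ℝ) (f : Config → ℝ) :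
    expec Λ β η J (fun σ => c * f σ) = c * expec Λ β η J f := by
  rw [expec, expec, ← mul_div_assoc]
  congr 1
  rw [Finset.mul_sum]
  exact Finset.sum_congr rfl fun σ _ => by ring

lemma expec_const (Λ : Finset V) (β : ℝ) (η : V → ℤ) (J : V → ℝ) (c : ℝ) :
    expec Λ β η J (fun _ => c) = c := by
  rw [expec]
  have : (∑ σ : Λ → Bool, c * weight Λ β η J (extend Λ σ)) = c * Zpart Λ β η J := by
    rw [Zpart, Finset.mul_sum]
  rw [this, mul_div_assoc, div_self (Zpart_pos Λ β η J).ne', mul_one]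

lemma covar_shift (Λ : Finset V) (β : ℝ) (η : V → ℤ) (J : V → ℝ) (f g : Config → ℝ) (c d : ℝ) :
    covar Λ β η J (fun σ => f σ + c) (fun σ => g σ + d) = covar Λ β η J f g := by
  rw [covar, covar]
  have e1 : (fun σ : Config => (f σ + c) * (g σ + d))
      = fun σ => f σ * g σ + (c * g σ + (d * f σ + c * d)) := by funext σ; ring
  rw [e1]
  have ecd : (fun _ : Config => c * d) = fun σ : Config => c * d := rfl
  simp only [expec_add, expec_cmul, expec_const]
  ring

lemma covar_add_left (Λ : Finset V) (β : ℝ) (η : V → ℤ) (J : V → ℝ) (f g h : Config → ℝ) :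
    covar Λ β η J (fun σ => f σ + g σ) h = covar Λ β η J f h + covar Λ β η J g h := by
  rw [covar, covar, covar]
  have e : (fun σ : Config => (f σ + g σ) * h σ) = fun σ => f σ * h σ + g σ * h σ := by
    funext σ; ring
  rw [e, expec_add, expec_add]
  ring

lemma covar_sub_left (Λ : Finset V) (β : ℝ) (η : V → ℤ) (J : V → ℝ) (f g h : Config → ℝ) :
    covar Λ β η J (fun σ => f σ - g σ) h = covar Λ β η J f h - covar Λ β η J g h := by
  rw [covar, covar, covar]
  have e : (fun σ : Config => (f σ - g σ) * h σ)
      = fun σ => f σ * h σ + (-1) * (g σ * h σ) := by funext σ; ring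
  have e2 : (fun σ : Config => f σ - g σ) = fun σ => f σ + (-1) * g σ := by funext σ; ring
  rw [e, e2, expec_add, expec_add, expec_cmul, expec_cmul]
  ring

lemma covar_nonneg_aux (Λ : Finset V) {β : ℝ} (hβ : 0 ≤ β) (J : V → ℝ) (f g : Config → ℝ)
    (hf : Monotone fun σ : Λ → Bool => f (extend Λ σ))
    (hg : Monotone fun σ : Λ → Bool => g (extend Λ σ))
    (hf0 : ∀ σ : Λ → Bool, 0 ≤ f (extend Λ σ)) (hg0 : ∀ σ : Λ → Bool, 0 ≤ g (extend Λ σ)) :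
    0 ≤ covar Λ β (fun _ => 0) J f g := by
  have hZ := Zpart_pos Λ β (fun _ => 0) J
  have key := fkg (μ := fun σ : Λ → Bool => weight Λ β (fun _ => 0) J (extend Λ σ))
      (f := fun σ : Λ → Bool => f (extend Λ σ)) (g := fun σ : Λ → Bool => g (extend Λ σ))
      (fun _ => (Real.exp_pos _).le) hf0 hg0 hf hg
      (fun a b => weight_supermod Λ hβ J a b)
  have hcomm : ∀ F : Config → ℝ,
      (∑ σ : Λ → Bool, F (extend Λ σ) * weight Λ β (fun _ => 0) J (extend Λ σ))
        = ∑ σ : Λ → Bool, weight Λ β (fun _ => 0) J (extend Λ σ) * F (extend Λ σ) :=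
    fun F => Finset.sum_congr rfl fun σ _ => mul_comm _ _
  rw [covar, expec, expec, expec, sub_nonneg, div_mul_div_comm,
    div_le_div_iff₀ (mul_pos hZ hZ) hZ, hcomm, hcomm]
  have e3 : (∑ σ : Λ → Bool, f (extend Λ σ) * g (extend Λ σ)
        * weight Λ β (fun _ => 0) J (extend Λ σ))
      = ∑ σ : Λ → Bool, weight Λ β (fun _ => 0) J (extend Λ σ)
        * (f (extend Λ σ) * g (extend Λ σ)) :=
    Finset.sum_congr rfl fun σ _ => mul_comm _ _
  rw [e3]
  have hZ' : Zpart Λ β (fun _ => 0) J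
      = ∑ σ : Λ → Bool, weight Λ β (fun _ => 0) J (extend Λ σ) := rfl
  rw [hZ']
  nlinarith [mul_le_mul_of_nonneg_right key hZ.le, hZ]

lemma covar_nonneg (Λ : Finset V) {β : ℝ} (hβ : 0 ≤ β) (J : V → ℝ) (f g : Config → ℝ)
    (hf : Monotone fun σ : Λ → Bool => f (extend Λ σ))
    (hg : Monotone fun σ : Λ → Bool => g (extend Λ σ)) :
    0 ≤ covar Λ β (fun _ => 0) J f g := by
  set c := f (extend Λ fun _ => false) with hc
  set d := g (extend Λ fun _ => false) with hd
  have hbot : ∀ σ : Λ → Bool, (fun _ => false) ≤ σ := fun σ v => Bool.false_le _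
  have h := covar_nonneg_aux Λ hβ J (fun σ => f σ + -c) (fun σ => g σ + -d)
    (by intro a b hab; have := hf hab; simpa using add_le_add_right this (-c))
    (by intro a b hab; have := hg hab; simpa using add_le_add_right this (-d))
    (by intro σ; have := hf (hbot σ); simp only [hc]; dsimp at this ⊢; linarith)
    (by intro σ; have := hg (hbot σ); simp only [hd]; dsimp at this ⊢; linarith)
  rwa [covar_shift] at h

theorem statement6 (β : ℝ) (hβ0 : 0 ≤ β) (Λ : Finset V) (J : V → ℝ) (y z : V)
    (hy : y ∈ Λ) (hz : z ∈ Λ) (A : Set Config) (hInc : Increasing A) (hdep : DependsOn A ↑Λ) :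
    |covar Λ β (fun _ => 0) J (fun σ => spin σ y * spin σ z) (ind A)|
      ≤ covar Λ β (fun _ => 0) J (fun σ => spin σ y) (ind A)
        + covar Λ β (fun _ => 0) J (fun σ => spin σ z) (ind A) := by
  have monoA : Monotone fun σ : Λ → Bool => ind A (extend Λ σ) := by
    intro a b hab
    have hext : ∀ v, extend Λ a v ≤ extend Λ b v := by
      intro v; by_cases hv : v ∈ Λ
      · simpa [extend, hv] using hab ⟨v, hv⟩
      · simp [extend, hv]
    simp only [ind]
    by_cases ha : extend Λ a ∈ A
    · rw [if_pos ha, if_pos (hInc _ _ ha hext)]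
    · rw [if_neg ha]; split_ifs <;> norm_num
  have mono1 : Monotone fun σ : Λ → Bool =>
      (fun τ : Config => spin τ y * spin τ z + (spin τ y + spin τ z)) (extend Λ σ) := by
    intro a b hab
    dsimp only
    rw [spin_extend _ hy, spin_extend _ hy, spin_extend _ hz, spin_extend _ hz]
    have r1 := sp_mono (hab ⟨y, hy⟩)
    have r2 := sp_mono (hab ⟨z, hz⟩)
    have p1 : 0 ≤ (1 + sp (b ⟨y, hy⟩)) * (sp (b ⟨z, hz⟩) - sp (a ⟨z, hz⟩)) :=
      mul_nonneg (by have := sp_ge (b ⟨y, hy⟩); linarith) (by linarith)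
    have p2 : 0 ≤ (1 + sp (a ⟨z, hz⟩)) * (sp (b ⟨y, hy⟩) - sp (a ⟨y, hy⟩)) :=
      mul_nonneg (by have := sp_ge (a ⟨z, hz⟩); linarith) (by linarith)
    nlinarith [p1, p2]
  have mono2 : Monotone fun σ : Λ → Bool =>
      (fun τ : Config => spin τ y + spin τ z - spin τ y * spin τ z) (extend Λ σ) := by
    intro a b hab
    dsimp only
    rw [spin_extend _ hy, spin_extend _ hy, spin_extend _ hz, spin_extend _ hz]
    have r1 := sp_mono (hab ⟨y, hy⟩)
    have r2 := sp_mono (hab ⟨z, hz⟩)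
    have p1 : 0 ≤ (1 - sp (a ⟨y, hy⟩)) * (sp (b ⟨z, hz⟩) - sp (a ⟨z, hz⟩)) :=
      mul_nonneg (by have := sp_le (a ⟨y, hy⟩); linarith) (by linarith)
    have p2 : 0 ≤ (1 - sp (b ⟨z, hz⟩)) * (sp (b ⟨y, hy⟩) - sp (a ⟨y, hy⟩)) :=
      mul_nonneg (by have := sp_le (b ⟨z, hz⟩); linarith) (by linarith)
    nlinarith [p1, p2]
  have h1 := covar_nonneg Λ hβ0 J
    (fun σ => spin σ y * spin σ z + (spin σ y + spin σ z)) (ind A) mono1 monoA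
  have h2 := covar_nonneg Λ hβ0 J
    (fun σ => spin σ y + spin σ z - spin σ y * spin σ z) (ind A) mono2 monoA
  rw [covar_add_left, covar_add_left] at h1
  rw [covar_sub_left, covar_add_left] at h2
  rw [abs_le]
  constructor <;> linarith

end Ising
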